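/- Let Γ ⊂ ℙ^r = ℙ(V) be a finite Gorenstein scheme of degree 2r+2 over an algebraically closed field k. The following are equivalent: (a) Γ is self-associated; (b) each of the (finitely many) subschemes of Γ of degree 2r+1 imposes the same number of conditions on quadrics as Γ does; (c) choosing a generator of O_Γ(1) and thereby identifying V with a subspace of O_Γ, there is a linear functional φ: O_Γ → k which vanishes on V² and which generates Hom_k(O_Γ, k) as an O_Γ-module. -/

import Mathlib

/-!
# Criterion for self-association (Eisenbud–Popescu, Theorem 7.1)

We model the finite Gorenstein scheme `Γ ⊂ ℙʳ = ℙ(V)` of degree `2r+2` over an algebraically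
closed field `k` by its coordinate algebra `A = H⁰(O_Γ)` (finite-dimensional over `k`, with
Gorenstein local rings), together with a chosen generator of the line bundle `O_Γ(1)`; this
identifies `H⁰(O_Γ(1))` with `A` and the embedding series `V` with an `(r+1)`-dimensional
subspace `V ⊆ A`.  The condition that `Γ ⊂ ℙ(V)` is a closed subscheme is that `V` separates
all subschemes of degree at most `2` (`hemb` below; `k` is algebraically closed).

By Serre duality, `H⁰(K_Γ) = Dual k A` with trace map `τ = (evaluation at 1)`, and
`H⁰(K_Γ(-1)) = Dual k A` as well; the Serre pairing between `H⁰(O_Γ(1)) = A` and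
`H⁰(K_Γ(-1)) = Dual k A` is evaluation, so `V^⊥ = {ψ | ψ|_V = 0}`.  An `A`-module map
`A = O_Γ(1) → K_Γ(-1) = Dual k A` is of the form `f ↦ Φ ∘ (f·–)` (`galeMap Φ`) for a
functional `Φ`, and it is an isomorphism exactly when `galeMap Φ` is bijective, i.e. when `Φ`
generates `Hom_k(A,k)` as an `A`-module.  Hence:

* (a) `Γ` is *self-associated* (there is an isomorphism `O_Γ(1) ≅ K_Γ(-1)` carrying `V`
  into `V^⊥`) iff `∃ Φ`, `galeMap Φ` bijective and `Φ` vanishes on `V·V`;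
* (b) subschemes of degree `2r+1` correspond to ideals `I` with `dim_k A/I = 2r+1`, and the
  number of conditions a subscheme imposes on quadrics is the rank of the restriction of the
  space `V·V` (the restrictions to `Γ` of the ambient quadrics) to it;
* (c) is the literal statement, with `V² = V·V`.
-/

open Module Submodule

/-- The `k`-linear map `A → Dual k A`, `f ↦ Φ ∘ (f * ·)`. -/
def galeMap (k A : Type) [Field k] [CommRing A] [Algebra k A]
    (Φ : Module.Dual k A) : A →ₗ[k] Module.Dual k A where
  toFun a := Φ.comp (LinearMap.mulLeft k a)
  map_add' a b := by ext y; simp [add_mul]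
  map_smul' c a := by ext y; simp [smul_mul_assoc]

section Aux

variable {k A : Type} [Field k] [CommRing A] [Algebra k A] [FiniteDimensional k A]

lemma galeMap_apply (Φ : Module.Dual k A) (a y : A) : galeMap k A Φ a y = Φ (a * y) := rfl

lemma gale_bij_of_surj (f : A →ₗ[k] Module.Dual k A) (hs : Function.Surjective f) :
    Function.Bijective f := by
  refine ⟨?_, hs⟩
  rw [← LinearMap.ker_eq_bot]
  have h1 : finrank k (LinearMap.range f) = finrank k (Module.Dual k A) := by
    rw [LinearMap.range_eq_top.mpr hs, finrank_top]
  have h2 := LinearMap.finrank_range_add_finrank_ker f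
  rw [h1, Subspace.dual_finrank_eq] at h2
  have h3 : finrank k (LinearMap.ker f) = 0 := by omega
  exact Submodule.finrank_eq_zero.mp h3

lemma gale_surj_iff (Φ : Module.Dual k A) :
    Function.Surjective (galeMap k A Φ) ↔
      ∀ ψ : Module.Dual k A, ∃ a : A, ∀ y : A, ψ y = Φ (a * y) := by
  constructor
  · intro h ψ
    obtain ⟨a, ha⟩ := h ψ
    exact ⟨a, fun y => by rw [← ha]; rfl⟩
  · intro h ψ
    obtain ⟨a, ha⟩ := h ψ
    exact ⟨a, by ext y; exact (ha y).symm⟩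

lemma quot_rank (I : Ideal A) :
    finrank k (A ⧸ I) + finrank k (I.restrictScalars k) = finrank k A := by
  rw [← (Submodule.Quotient.restrictScalarsEquiv k (I : Submodule A A)).finrank_eq]
  exact Submodule.finrank_quotient_add_finrank (I.restrictScalars k)

lemma map_finrank_iff (W p : Submodule k A) :
    finrank k (Submodule.map p.mkQ W) = finrank k W ↔ W ⊓ p = ⊥ := by
  have hr : LinearMap.range (p.mkQ.comp W.subtype) = Submodule.map p.mkQ W := by
    rw [LinearMap.range_comp, Submodule.range_subtype]
  have hk : LinearMap.ker (p.mkQ.comp W.subtype) = Submodule.comap W.subtype p := by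
    rw [LinearMap.ker_comp, Submodule.ker_mkQ]
  have h := LinearMap.finrank_range_add_finrank_ker (p.mkQ.comp W.subtype)
  rw [hr, hk] at h
  constructor
  · intro he
    have h3 : finrank k (Submodule.comap W.subtype p) = 0 := by omega
    have hb : Submodule.comap W.subtype p = ⊥ := Submodule.finrank_eq_zero.mp h3
    rw [← disjoint_iff]
    exact Submodule.disjoint_iff_comap_eq_bot.mpr hb
  · intro he
    have hb : Submodule.comap W.subtype p = ⊥ :=
      Submodule.disjoint_iff_comap_eq_bot.mp (disjoint_iff.mpr he)
    rw [hb, finrank_bot] at h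
    omega

lemma b_iff_P {r : ℕ} (hdeg : finrank k A = 2 * r + 2) (W : Submodule k A) :
    (∀ I : Ideal A, finrank k (A ⧸ I) = 2 * r + 1 →
        finrank k (Submodule.map (I.restrictScalars k).mkQ W) = finrank k W) ↔
      (∀ x ∈ W, (∀ a : A, ∃ c : k, a * x = c • x) → x = 0) := by
  constructor
  · intro hb x hxW hx
    by_contra hx0
    set I : Ideal A := Ideal.span {x} with hI
    have hxI : x ∈ I.restrictScalars k := Ideal.subset_span rfl
    have hIr : I.restrictScalars k = Submodule.span k {x} := by
      apply le_antisymm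
      · intro y hy
        rw [Submodule.restrictScalars_mem] at hy
        obtain ⟨a, ha⟩ := Ideal.mem_span_singleton'.mp hy
        obtain ⟨c, hc⟩ := hx a
        rw [← ha, hc]
        exact Submodule.smul_mem _ c (Submodule.mem_span_singleton_self x)
      · rw [Submodule.span_le]
        intro y hy
        rw [Set.mem_singleton_iff] at hy
        subst hy
        exact hxI
    have h1 : finrank k (I.restrictScalars k) = 1 := by
      rw [hIr]; exact finrank_span_singleton hx0
    have hq : finrank k (A ⧸ I) = 2 * r + 1 := by
      have := quot_rank (k := k) I; omega
    have hd := (map_finrank_iff W _).mp (hb I hq)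
    have : x ∈ (⊥ : Submodule k A) := hd ▸ Submodule.mem_inf.mpr ⟨hxW, hxI⟩
    exact hx0 ((Submodule.mem_bot k).mp this)
  · intro hP I hq
    apply (map_finrank_iff W _).mpr
    rw [eq_bot_iff]
    intro x hx
    obtain ⟨hxW, hxI⟩ := Submodule.mem_inf.mp hx
    rw [Submodule.mem_bot]
    by_contra hx0
    have h1 : finrank k (I.restrictScalars k) = 1 := by
      have := quot_rank (k := k) I; omega
    have hsp : Submodule.span k {x} = I.restrictScalars k := by
      apply Submodule.eq_of_le_of_finrank_le
        (Submodule.span_le.mpr (by simpa using hxI))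
      rw [h1, finrank_span_singleton hx0]
    refine hx0 (hP x hxW fun a => ?_)
    have hax : a * x ∈ Submodule.span k {x} := by
      rw [hsp]
      exact I.mul_mem_left a hxI
    obtain ⟨c, hc⟩ := Submodule.mem_span_singleton.mp hax
    exact ⟨c, hc.symm⟩

lemma c_to_P (W : Submodule k A) (φ : Module.Dual k A) (hvan : ∀ u ∈ W, φ u = 0)
    (hgen : ∀ ψ : Module.Dual k A, ∃ a : A, ∀ y : A, ψ y = φ (a * y)) :
    ∀ x ∈ W, (∀ a : A, ∃ c : k, a * x = c • x) → x = 0 := by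
  intro x hxW hx
  have hbij : Function.Bijective (galeMap k A φ) :=
    gale_bij_of_surj _ ((gale_surj_iff φ).mpr hgen)
  have h0 : galeMap k A φ x = 0 := by
    ext y
    obtain ⟨c, hc⟩ := hx y
    have hxy : x * y = c • x := by rw [mul_comm]; exact hc
    simp [galeMap_apply, hxy, hvan x hxW]
  have := hbij.injective (a₁ := x) (a₂ := 0) (by rw [h0, map_zero])
  exact this

lemma P_to_c [IsAlgClosed k]
    (hGor : ∃ φ₀ : Module.Dual k A, ∀ ψ : Module.Dual k A, ∃ a : A, ∀ y : A, ψ y = φ₀ (a * y))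
    (hnt : Nontrivial A) (W : Submodule k A)
    (hP : ∀ x ∈ W, (∀ a : A, ∃ c : k, a * x = c • x) → x = 0) :
    ∃ φ : Module.Dual k A, (∀ u ∈ W, φ u = 0) ∧
      ∀ ψ : Module.Dual k A, ∃ a : A, ∀ y : A, ψ y = φ (a * y) := by
  haveI := hnt
  obtain ⟨φ₀, hφ₀⟩ := hGor
  have hsurj : Function.Surjective (galeMap k A φ₀) := (gale_surj_iff φ₀).mpr hφ₀
  have hbij := gale_bij_of_surj _ hsurj
  set B : LinearMap.BilinForm k A := galeMap k A φ₀ with hBdef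
  have hnd : B.Nondegenerate := by
    refine ⟨fun m hm => ?_, fun m hm => ?_⟩
    · apply hbij.injective (a₁ := m) (a₂ := 0)
      rw [map_zero]
      ext y
      exact hm y
    · apply hbij.injective (a₁ := m) (a₂ := 0)
      rw [map_zero]
      ext y
      exact (show φ₀ (m * y) = φ₀ (y * m) by rw [mul_comm]).trans (hm y)
  have hrefl : B.IsRefl := by
    intro x y h
    have : B y x = B x y := by
      show φ₀ (y * x) = φ₀ (x * y)
      rw [mul_comm]
    rw [this, h]
  have hunit : ∃ u ∈ B.orthogonal W, IsUnit u := by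
    by_contra hno
    push_neg at hno
    haveI : IsArtinianRing A := isArtinian_of_tower k inferInstance
    haveI : Finite {I : Ideal A // I.IsMaximal} := by
      exact (IsArtinianRing.setOfPred_isMaximal_finite A).to_subtype
    set Wo := B.orthogonal W with hWo
    have hcov : ⋃ (i : {I : Ideal A // I.IsMaximal}),
        ((Submodule.comap Wo.subtype (i.1.restrictScalars k) : Submodule k Wo) : Set Wo)
          = Set.univ := by
      rw [Set.eq_univ_iff_forall]
      intro u
      have hnu : ¬IsUnit (u : A) := hno u u.2
      obtain ⟨M, hM, hle⟩ := Ideal.exists_le_maximal (Ideal.span {(u : A)})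
        (by rwa [Ne, Ideal.span_singleton_eq_top])
      exact Set.mem_iUnion.mpr ⟨⟨M, hM⟩, by
        simpa [Submodule.mem_comap] using hle (Ideal.subset_span rfl)⟩
    obtain ⟨i, hi⟩ := Subspace.exists_eq_top_of_iUnion_eq_univ hcov
    have hWoM : Wo ≤ i.1.restrictScalars k := Submodule.comap_subtype_eq_top.mp hi
    set M := i.1 with hMdef
    have hMmax : M.IsMaximal := i.2
    haveI : M.IsPrime := hMmax.isPrime
    haveI : Module.Finite k (A ⧸ M) :=
      Module.Finite.of_surjective (Ideal.Quotient.mkₐ k M).toLinearMap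
        (Ideal.Quotient.mkₐ_surjective k M)
    haveI : Algebra.IsIntegral k (A ⧸ M) := Algebra.IsIntegral.of_finite k (A ⧸ M)
    have halg : Function.Surjective (algebraMap k (A ⧸ M)) :=
      IsAlgClosed.algebraMap_bijective_of_isIntegral.2
    haveI : Nontrivial (A ⧸ M) := Ideal.Quotient.nontrivial_iff.mpr hMmax.ne_top
    have hq1 : finrank k (A ⧸ M) = 1 := by
      have hinj : Function.Injective (algebraMap k (A ⧸ M)) :=
        (algebraMap k (A ⧸ M)).injective
      have := LinearEquiv.finrank_eq
        (LinearEquiv.ofBijective (Algebra.linearMap k (A ⧸ M)) ⟨hinj, halg⟩)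
      rw [← this, finrank_self]
    have hA1 : 1 ≤ finrank k A := by
      have : 0 < finrank k A := Module.finrank_pos
      omega
    have hMr : finrank k (M.restrictScalars k) = finrank k A - 1 := by
      have := quot_rank (k := k) M
      omega
    have hOM : finrank k (B.orthogonal (M.restrictScalars k)) = 1 := by
      rw [LinearMap.BilinForm.finrank_orthogonal hnd, hMr]
      omega
    have hne : B.orthogonal (M.restrictScalars k) ≠ ⊥ := by
      intro h
      rw [h, finrank_bot] at hOM
      exact one_ne_zero hOM.symm
    obtain ⟨x, hxO, hx0⟩ := (Submodule.ne_bot_iff _).mp hne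
    have hxW : x ∈ W := by
      have h1 : B.orthogonal (M.restrictScalars k) ≤ B.orthogonal Wo :=
        LinearMap.BilinForm.orthogonal_le hWoM
      have h2 : B.orthogonal Wo = W :=
        LinearMap.BilinForm.orthogonal_orthogonal hnd hrefl W
      exact h2 ▸ h1 hxO
    have hMx : ∀ m ∈ M, m * x = 0 := by
      intro m hm
      apply hnd.1 _ (fun y => ?_)
      have hym : (y * m) ∈ (M.restrictScalars k : Submodule k A) := M.mul_mem_left y hm
      have h0 : B (y * m) x = 0 := hxO _ hym
      calc B (m * x) y = φ₀ ((m * x) * y) := rfl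
        _ = φ₀ ((y * m) * x) := by ring_nf
        _ = 0 := h0
    have hsc : ∀ a : A, ∃ c : k, a * x = c • x := by
      intro a
      obtain ⟨c, hc⟩ := halg (Ideal.Quotient.mk M a)
      refine ⟨c, ?_⟩
      have hmk : Ideal.Quotient.mk M (algebraMap k A c) = algebraMap k (A ⧸ M) c := by
        rw [← Ideal.Quotient.algebraMap_eq, ← IsScalarTower.algebraMap_apply]
      have hmem : a - algebraMap k A c ∈ M := by
        rw [← Ideal.Quotient.eq_zero_iff_mem, map_sub, hmk, hc, sub_self]
      have h0 : (a - algebraMap k A c) * x = 0 := hMx _ hmem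
      have h1 : a * x = algebraMap k A c * x := by
        rw [sub_mul] at h0
        exact sub_eq_zero.mp h0
      rw [h1, ← Algebra.smul_def]
    exact hx0 (hP x hxW hsc)
  obtain ⟨u, huW, hu⟩ := hunit
  obtain ⟨v, hv⟩ := hu.exists_right_inv
  refine ⟨galeMap k A φ₀ u, ?_, ?_⟩
  · intro w hw
    have h0 : B w u = 0 := huW w hw
    show φ₀ (u * w) = 0
    rw [mul_comm]
    exact h0
  · intro ψ
    obtain ⟨b, hb⟩ := hφ₀ ψ
    refine ⟨v * b, fun y => ?_⟩
    rw [hb y, galeMap_apply]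
    congr 1
    calc b * y = (u * v) * (b * y) := by rw [hv, one_mul]
      _ = u * (v * b * y) := by ring

end Aux

/-- **Criterion for self-association** (Eisenbud–Popescu, Theorem 7.1).
Let `Γ ⊂ ℙʳ = ℙ(V)` be a finite Gorenstein scheme of degree `2r+2` over an algebraically
closed field `k`.  The following are equivalent:
(a) `Γ` is self-associated;
(b) each subscheme of `Γ` of degree `2r+1` imposes the same number of conditions on quadrics
    as `Γ` does;
(c) identifying `V` with a subspace of `O_Γ` via a generator of `O_Γ(1)`, there is a linear
    functional `φ : O_Γ → k` vanishing on `V²` which generates `Hom_k(O_Γ, k)` as an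
    `O_Γ`-module. -/
theorem self_association_criterion
    (k : Type) [Field k] [IsAlgClosed k]
    (A : Type) [CommRing A] [Algebra k A] [FiniteDimensional k A]
    -- `Γ = Spec A` is (locally) Gorenstein:
    (hGor : ∃ φ₀ : Module.Dual k A, ∀ ψ : Module.Dual k A, ∃ a : A, ∀ y : A, ψ y = φ₀ (a * y))
    (r : ℕ) (hdeg : Module.finrank k A = 2 * r + 2)
    -- the embedding series, identified with a subspace `V ⊆ A`:
    (V : Submodule k A) (hV : Module.finrank k ↥V = r + 1)
    -- `(V, O_Γ(1))` embeds `Γ` as a closed subscheme of `ℙ(V)`: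
    (hemb : ∀ I : Ideal A, Module.finrank k (A ⧸ I) ≤ 2 →
      ∀ b : A ⧸ I, ∃ v ∈ V, Ideal.Quotient.mk I v = b) :
    -- (a) ↔ (b):
    ((∃ Φ : Module.Dual k A, Function.Bijective (galeMap k A Φ) ∧
        ∀ v ∈ V, ∀ w ∈ V, Φ (v * w) = 0) ↔
      (∀ I : Ideal A, Module.finrank k (A ⧸ I) = 2 * r + 1 →
        Module.finrank k ↥(Submodule.map (I.restrictScalars k).mkQ (V * V))
          = Module.finrank k ↥(V * V))) ∧
    -- (b) ↔ (c):
    ((∀ I : Ideal A, Module.finrank k (A ⧸ I) = 2 * r + 1 →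
        Module.finrank k ↥(Submodule.map (I.restrictScalars k).mkQ (V * V))
          = Module.finrank k ↥(V * V)) ↔
      (∃ φ : Module.Dual k A, (∀ u ∈ V * V, φ u = 0) ∧
        ∀ ψ : Module.Dual k A, ∃ a : A, ∀ y : A, ψ y = φ (a * y))) := by
  have hnt : Nontrivial A := Module.nontrivial_of_finrank_pos (R := k) (by rw [hdeg]; omega)
  have hbP := b_iff_P hdeg (V * V)
  have key_c : (∃ φ : Module.Dual k A, (∀ u ∈ V * V, φ u = 0) ∧
      ∀ ψ : Module.Dual k A, ∃ a : A, ∀ y : A, ψ y = φ (a * y)) ↔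
      (∀ x ∈ V * V, (∀ a : A, ∃ c : k, a * x = c • x) → x = 0) := by
    constructor
    · rintro ⟨φ, h1, h2⟩
      exact c_to_P (V * V) φ h1 h2
    · intro hP
      exact P_to_c hGor hnt (V * V) hP
  have key_a : (∃ Φ : Module.Dual k A, Function.Bijective (galeMap k A Φ) ∧
      ∀ v ∈ V, ∀ w ∈ V, Φ (v * w) = 0) ↔
      (∃ φ : Module.Dual k A, (∀ u ∈ V * V, φ u = 0) ∧
        ∀ ψ : Module.Dual k A, ∃ a : A, ∀ y : A, ψ y = φ (a * y)) := by
    constructor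
    · rintro ⟨Φ, hbij, hpair⟩
      refine ⟨Φ, ?_, (gale_surj_iff Φ).mp hbij.surjective⟩
      intro u hu
      refine Submodule.mul_induction_on hu (fun v hv w hw => hpair v hv w hw) ?_
      intro x y hx hy
      rw [map_add, hx, hy, add_zero]
    · rintro ⟨φ, hvan, hgen⟩
      exact ⟨φ, gale_bij_of_surj _ ((gale_surj_iff φ).mpr hgen),
        fun v hv w hw => hvan _ (Submodule.mul_mem_mul hv hw)⟩
  constructor
  · rw [key_a, key_c]
    exact hbP.symm
  · rw [key_c]
    exact hbP
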